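/- arXiv:2604.07062 — 5 statements merged into one kernel-verified Lean document; each statement's English description precedes it below -/
import Mathlib

section
/- For the complex-conjugation function f(z) = conj(z), the difference quotient Δf(z_0, z_1) = (conj(z_1) − conj(z_0))/(z_1 − z_0) is not locally bounded near any diagonal point in the following sense: for every z ∈ ℂ, Δ²f is unbounded on every punctured neighborhood of (z,z,z) in C³(ℂ); equivalently, conj is not of class B²_Δ(ℂ). -/
/-- The difference operator. -/
noncomputable def delta (n : ℕ) (f : (Fin (n + 1) → ℂ) → ℂ) :
    (Fin (n + 2) → ℂ) → ℂ :=
  fun z => (f (fun i => z i.succ) - f (fun i => z i.castSucc)) /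
    (z (Fin.last (n + 1)) - z 0)

/-- `k`-fold iteration of the difference operator, starting from a 1-variable function. -/
noncomputable def deltaIter (f : (Fin 1 → ℂ) → ℂ) : (k : ℕ) → (Fin (k + 1) → ℂ) → ℂ
  | 0 => f
  | k + 1 => delta k (deltaIter f k)

/-- Complex conjugation, viewed as a symmetric 1-variable function. -/
noncomputable def conjF : (Fin 1 → ℂ) → ℂ := fun v => (starRingEnd ℂ) (v 0)

/-!
The difference operator is translation invariant, and since conjugation commutes with real
dilations, `Δ^(k+1) conj` is homogeneous of degree `-k` under them. Along the injective tuples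
`z + t • (0, 1, i)`, which tend to `(z, z, z)` as `t → 0⁺`, this gives `Δ² conj = (1 + i) / t`.
-/

open Filter Topology

lemma delta_affine {n : ℕ} (g : (Fin (n + 1) → ℂ) → ℂ) (a c s t : ℂ)
    (hg : ∀ v, g (fun i => a + t * v i) = c + s * g v) (v : Fin (n + 2) → ℂ) :
    delta n g (fun i => a + t * v i) = s / t * delta n g v := by
  simp only [delta, hg, add_sub_add_left_eq_sub, ← mul_sub, ← div_div]
  ring

lemma deltaIter_conjF_affine (k : ℕ) (a : ℂ) {t : ℝ} (ht : t ≠ 0) (v : Fin (k + 2) → ℂ) :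
    deltaIter conjF (k + 1) (fun i => a + t * v i) =
      (t ^ k : ℂ)⁻¹ * deltaIter conjF (k + 1) v := by
  have ht' : (t : ℂ) ≠ 0 := Complex.ofReal_ne_zero.mpr ht
  induction k with
  | zero =>
    rw [deltaIter, delta_affine _ a (starRingEnd ℂ a) t t _ v]
    · simp [ht', deltaIter]
    · intro w
      simp [deltaIter, conjF]
  | succ k ih =>
    rw [deltaIter, delta_affine _ a 0 ((t : ℂ) ^ k)⁻¹ t (fun w => by rw [ih w, zero_add]) v,
      deltaIter]
    ring

lemma deltaIter_conjF_two_zero_one_I : deltaIter conjF 2 ![0, 1, Complex.I] = 1 + Complex.I := by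
  have h : (-Complex.I - 1) / (Complex.I - 1) = Complex.I := by
    rw [div_eq_iff (by simp [sub_eq_zero, Complex.ext_iff])]
    linear_combination -Complex.I_sq
  simp [deltaIter, delta, conjF, Fin.last, h]
  linear_combination -Complex.I_sq

lemma injective_zero_one_I : Function.Injective ![0, 1, Complex.I] := by
  intro i j h
  fin_cases i <;> fin_cases j <;> simp_all [Complex.ext_iff]

/-- For every `z ∈ ℂ`, the second iterated difference quotient `Δ²(conj)` is
unbounded on (the distinct-tuple part of) every neighborhood of `(z, z, z)`:
complex conjugation is not of class `B²_Δ(ℂ)`. -/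
theorem stmt3 (z : ℂ) (U : Set (Fin 3 → ℂ)) (hU : U ∈ nhds (fun _ => z : Fin 3 → ℂ)) :
    ¬ ∃ M : ℝ, ∀ w ∈ U, Function.Injective w → ‖deltaIter conjF 2 w‖ ≤ M := by
  rintro ⟨M, hM⟩
  let w : ℝ → Fin 3 → ℂ := fun t i => z + t * ![0, 1, Complex.I] i
  have hw : Tendsto w (𝓝[>] 0) (𝓝 fun _ => z) := by
    refine tendsto_nhdsWithin_of_tendsto_nhds ?_
    simpa [w] using (show Continuous w by fun_prop).tendsto 0
  have hnorm : ∀ t : ℝ, 0 < t → ‖deltaIter conjF 2 (w t)‖ = ‖1 + Complex.I‖ * t⁻¹ := by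
    intro t ht
    rw [deltaIter_conjF_affine 1 z ht.ne', deltaIter_conjF_two_zero_one_I]
    simp [abs_of_pos ht, mul_comm]
  have hbig : Tendsto (fun t : ℝ => ‖1 + Complex.I‖ * t⁻¹) (𝓝[>] 0) atTop :=
    tendsto_inv_nhdsGT_zero.const_mul_atTop (by simp [Complex.ext_iff])
  obtain ⟨t, ht, htU, htM⟩ :=
    (eventually_mem_nhdsWithin.and
      ((hw.eventually_mem hU).and (hbig.eventually_gt_atTop M))).exists
  have hinj : Function.Injective (w t) :=
    ((add_right_injective z).comp (mul_right_injective₀ (by exact_mod_cast ht.ne'))).comp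
      injective_zero_one_I
  linarith [hnorm t ht ▸ hM (w t) htU hinj]
end

section
/- For X = S¹ (the unit circle in ℂ) and n ≥ 1, the symmetric group S_n acts transitively on the connected components of the configuration space C^n(S¹), and the stabilizer of each connected component is a nontrivial cyclic subgroup of order n (generated by the cyclic permutation corresponding to rotating the labels along the circle) when n ≥ 2. -/
/-- The configuration space of `n` distinct points on the unit circle `S¹ ⊆ ℂ`. -/
abbrev CircleConfig (n : ℕ) :=
  {f : Fin n → ℂ // Function.Injective f ∧ ∀ i, ‖f i‖ = 1}

/-- The right action of `S_n` on circle configurations: `(x ◁ σ) i = x (σ i)`. -/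
def permAct {n : ℕ} (σ : Equiv.Perm (Fin n)) (x : CircleConfig n) : CircleConfig n :=
  ⟨x.1 ∘ σ, x.2.1.comp σ.injective, fun i => x.2.2 (σ i)⟩

/-!
Sorting the points by argument relabels any configuration into one whose angles increase and
span less than a full turn. These angle vectors form a convex set, so all the configurations they
give, the `n`-th roots of unity among them, lie in one component: the action is transitive.

For the stabilizer, the signed area of the triangle `x i, x j, x k` never vanishes on `C^n(S¹)`,
so its sign is constant on components; on the roots of unity it records the cyclic order of the
labels. A relabelling preserving the component of the roots of unity therefore preserves the
cyclic order, i.e. it is a power of the rotation `finRotate n`; conversely that rotation turns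
the roots of unity into a configuration with angles `2πk/n + 2π/n`, again increasing, so it
preserves the component. Other stabilizers are conjugates of this one.
-/

open Real Set ComplexConjugate
open Complex (I arg)

lemma pos_of_mem_connectedComponent {X : Type*} [TopologicalSpace X] {f : X → ℝ}
    (hf : Continuous f) (hf0 : ∀ z, f z ≠ 0) {x y : X} (hy : y ∈ connectedComponent x)
    (hx : 0 < f x) : 0 < f y := by
  have hclopen : IsClopen {z | 0 < f z} := by
    refine ⟨?_, isOpen_lt continuous_const hf⟩
    convert isClosed_le continuous_const hf using 1
    ext z
    exact ((hf0 z).symm.le_iff_lt).symm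
  exact hclopen.connectedComponent_subset hx hy

namespace CircleConfig

variable {n : ℕ}

lemma permAct_permAct (σ τ : Equiv.Perm (Fin n)) (x : CircleConfig n) :
    permAct σ (permAct τ x) = permAct (τ * σ) x := rfl

@[simp]
lemma permAct_one (x : CircleConfig n) : permAct 1 x = x := rfl

lemma continuous_permAct (σ : Equiv.Perm (Fin n)) : Continuous (permAct (n := n) σ) :=
  continuous_induced_rng.2 <|
    continuous_pi fun i => (continuous_apply (σ i)).comp continuous_subtype_val

lemma connectedComponent_permAct_eq_iff (σ : Equiv.Perm (Fin n)) {x y : CircleConfig n} :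
    connectedComponent (permAct σ x) = connectedComponent (permAct σ y) ↔
      connectedComponent x = connectedComponent y := by
  have congr_permAct : ∀ (σ : Equiv.Perm (Fin n)) {x y : CircleConfig n},
      connectedComponent x = connectedComponent y →
        connectedComponent (permAct σ x) = connectedComponent (permAct σ y) :=
    fun σ x y h => connectedComponent_eq <|
      (continuous_permAct σ).mapsTo_connectedComponent x
        (connectedComponent_eq_iff_mem.1 h.symm)
  refine ⟨fun h => ?_, congr_permAct σ⟩
  simpa [permAct_permAct] using congr_permAct σ⁻¹ h

def componentStabilizer (x : CircleConfig n) : Subgroup (Equiv.Perm (Fin n)) where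
  carrier := {σ | connectedComponent (permAct σ x) = connectedComponent x}
  one_mem' := rfl
  mul_mem' {σ τ} hσ hτ := ((connectedComponent_permAct_eq_iff τ).2 hσ).trans hτ
  inv_mem' {σ} hσ := by
    simpa [permAct_permAct] using ((connectedComponent_permAct_eq_iff σ⁻¹).2 hσ).symm

lemma mem_componentStabilizer {σ : Equiv.Perm (Fin n)} {x : CircleConfig n} :
    σ ∈ componentStabilizer x ↔ connectedComponent (permAct σ x) = connectedComponent x :=
  Iff.rfl

lemma componentStabilizer_eq_of_connectedComponent_eq {x y : CircleConfig n}
    (h : connectedComponent x = connectedComponent y) :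
    componentStabilizer x = componentStabilizer y := by
  ext σ
  rw [mem_componentStabilizer, mem_componentStabilizer,
    (connectedComponent_permAct_eq_iff σ).2 h, h]

lemma componentStabilizer_eq_map_permAct (τ : Equiv.Perm (Fin n)) (x : CircleConfig n) :
    componentStabilizer x =
      (componentStabilizer (permAct τ x)).map (MulAut.conj τ).toMonoidHom := by
  ext σ
  have h : permAct ((MulAut.conj τ).symm σ) (permAct τ x) = permAct τ (permAct σ x) := by
    simp only [permAct_permAct, MulAut.conj_symm_apply]
    congr 1
    group
  rw [Subgroup.mem_map_equiv, mem_componentStabilizer, mem_componentStabilizer, h,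
    connectedComponent_permAct_eq_iff]

def increasingAngles (n : ℕ) : Set (Fin n → ℝ) :=
  {θ | StrictMono θ ∧ ∀ k l, θ l - θ k < 2 * π}

lemma convex_increasingAngles : Convex ℝ (increasingAngles n) := by
  rintro θ ⟨hθ, hθ'⟩ η ⟨hη, hη'⟩ a b ha hb hab
  refine ⟨fun k l hkl => ?_, fun k l => ?_⟩
  · have := convex_Ioi (0 : ℝ) (sub_pos.2 (hθ hkl)) (sub_pos.2 (hη hkl)) ha hb hab
    simp only [mem_Ioi, smul_eq_mul, Pi.add_apply, Pi.smul_apply] at this ⊢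
    linarith
  · have := convex_Iio (2 * π) (hθ' k l) (hη' k l) ha hb hab
    simp only [mem_Iio, smul_eq_mul, Pi.add_apply, Pi.smul_apply] at this ⊢
    linarith

lemma add_const_mem_increasingAngles {θ : Fin n → ℝ} (hθ : θ ∈ increasingAngles n)
    (c : ℝ) :
    (fun k => θ k + c) ∈ increasingAngles n :=
  ⟨fun _ _ hkl => add_lt_add_left (hθ.1 hkl) c, fun k l => by simpa using hθ.2 k l⟩

lemma injective_exp_of_mem_increasingAngles {θ : Fin n → ℝ}
    (hθ : θ ∈ increasingAngles n) : Function.Injective fun k => Complex.exp (θ k * I) := by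
  have hinj : InjOn Circle.exp (range θ) := by
    refine Circle.exp_injOn_of_forall_sub_mem_Ioo ?_
    rintro _ ⟨k, rfl⟩ _ ⟨l, rfl⟩
    constructor <;> linarith [hθ.2 k l, hθ.2 l k]
  intro k l h
  exact hθ.1.injective (hinj ⟨k, rfl⟩ ⟨l, rfl⟩ (Subtype.ext h))

noncomputable def ofAngles (θ : Fin n → ℝ) (hθ : θ ∈ increasingAngles n) :
    CircleConfig n :=
  ⟨fun k => Complex.exp (θ k * I), injective_exp_of_mem_increasingAngles hθ,
    fun _ => Complex.norm_exp_ofReal_mul_I _⟩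

lemma connectedComponent_ofAngles_eq {θ η : Fin n → ℝ} (hθ : θ ∈ increasingAngles n)
    (hη : η ∈ increasingAngles n) :
    connectedComponent (ofAngles θ hθ) = connectedComponent (ofAngles η hη) := by
  have : PreconnectedSpace (increasingAngles n) :=
    Subtype.preconnectedSpace convex_increasingAngles.isPreconnected
  have hcont : Continuous fun θ : increasingAngles n => ofAngles θ.1 θ.2 :=
    continuous_induced_rng.2 <| continuous_pi fun k =>
      (Complex.continuous_ofReal.comp ((continuous_apply k).comp continuous_subtype_val)).mul
        continuous_const |>.cexp
  exact connectedComponent_eq <|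
    (isPreconnected_range hcont).subset_connectedComponent ⟨⟨θ, hθ⟩, rfl⟩ ⟨⟨η, hη⟩, rfl⟩

lemma exp_arg (x : CircleConfig n) (k : Fin n) : Complex.exp (arg (x.1 k) * I) = x.1 k := by
  simpa [x.2.2 k] using Complex.norm_mul_exp_arg_mul_I (x.1 k)

lemma arg_injective (x : CircleConfig n) : Function.Injective fun k => arg (x.1 k) :=
  fun k l h => x.2.1 <| by simp only at h; rw [← exp_arg x k, ← exp_arg x l, h]

/-- Twice the signed area of the triangle `x i, x j, x k`; positive iff it is counterclockwise. -/
noncomputable def signedArea (i j k : Fin n) (x : CircleConfig n) : ℝ :=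
  ((x.1 k - x.1 i) * conj (x.1 j - x.1 i)).im

lemma continuous_signedArea (i j k : Fin n) : Continuous (signedArea (n := n) i j k) := by
  have h : ∀ l : Fin n, Continuous fun x : CircleConfig n => x.1 l := fun l =>
    (continuous_apply l).comp continuous_subtype_val
  exact Complex.continuous_im.comp
    (((h k).sub (h i)).mul (Complex.continuous_conj.comp ((h j).sub (h i))))

lemma signedArea_permAct (i j k : Fin n) (σ : Equiv.Perm (Fin n)) (x : CircleConfig n) :
    signedArea i j k (permAct σ x) = signedArea (σ i) (σ j) (σ k) x := rfl

lemma signedArea_swap (i j k : Fin n) (x : CircleConfig n) :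
    signedArea i k j x = -signedArea i j k x := by
  simp only [signedArea, Complex.mul_im, Complex.conj_re, Complex.conj_im, Complex.sub_re,
    Complex.sub_im]
  ring

lemma signedArea_eq_of_angles (i j k : Fin n) (x : CircleConfig n) (θ : Fin n → ℝ)
    (hx : ∀ l, x.1 l = Complex.exp (θ l * I)) :
    signedArea i j k x =
      4 * sin ((θ j - θ i) / 2) * sin ((θ k - θ j) / 2) * sin ((θ k - θ i) / 2) := by
  have hprod : (sin (θ k) - sin (θ i)) * (cos (θ j) - cos (θ i))
      - (cos (θ k) - cos (θ i)) * (sin (θ j) - sin (θ i)) =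
      4 * sin ((θ j - θ i) / 2) * sin ((θ k - θ j) / 2) * sin ((θ k - θ i) / 2) := by
    rw [sin_sub_sin, sin_sub_sin, cos_sub_cos, cos_sub_cos,
      show (θ k - θ j) / 2 = (θ k + θ i) / 2 - (θ j + θ i) / 2 by ring, sin_sub]
    ring
  rw [← hprod]
  simp only [signedArea, hx, Complex.mul_im, Complex.conj_re, Complex.conj_im, Complex.sub_re,
    Complex.sub_im, Complex.exp_ofReal_mul_I_re, Complex.exp_ofReal_mul_I_im]
  ring

lemma signedArea_ne_zero (x : CircleConfig n) {i j k : Fin n} (hij : i ≠ j) (hik : i ≠ k)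
    (hjk : j ≠ k) : signedArea i j k x ≠ 0 := by
  have hsin : ∀ {l m}, l ≠ m → sin ((arg (x.1 l) - arg (x.1 m)) / 2) ≠ 0 := by
    intro l m hlm
    have hne := (arg_injective x).ne hlm
    have := Complex.neg_pi_lt_arg (x.1 l); have := Complex.arg_le_pi (x.1 l)
    have := Complex.neg_pi_lt_arg (x.1 m); have := Complex.arg_le_pi (x.1 m)
    rw [Ne, sin_eq_zero_iff_of_lt_of_lt (by linarith) (by linarith)]
    exact fun h => hne (by linarith)
  rw [signedArea_eq_of_angles i j k x _ fun l => (exp_arg x l).symm]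
  exact mul_ne_zero (mul_ne_zero (mul_ne_zero four_ne_zero (hsin hij.symm)) (hsin hjk.symm))
    (hsin hik.symm)

lemma signedArea_ofAngles_pos {θ : Fin n → ℝ} (hθ : θ ∈ increasingAngles n) {i j k : Fin n}
    (hij : i < j) (hjk : j < k) : 0 < signedArea i j k (ofAngles θ hθ) := by
  have hi := hθ.1 hij
  have hj := hθ.1 hjk
  have hspread := hθ.2 i k
  rw [signedArea_eq_of_angles i j k _ θ fun _ => rfl]
  have hsin : ∀ {a b : ℝ}, a < b → b - a < 2 * π → 0 < sin ((b - a) / 2) := fun hab hba =>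
    sin_pos_of_pos_of_lt_pi (by linarith) (by linarith)
  exact mul_pos (mul_pos (mul_pos four_pos (hsin hi (by linarith))) (hsin hj (by linarith)))
    (hsin (hi.trans hj) hspread)

noncomputable def stdAngles (n : ℕ) (k : Fin n) : ℝ := 2 * π * k / n

lemma stdAngles_mem : stdAngles n ∈ increasingAngles n := by
  refine ⟨fun k l hkl => ?_, fun k l => ?_⟩
  all_goals
    have hn : (0 : ℝ) < n := by exact_mod_cast k.pos
    unfold stdAngles
  · gcongr
    exact_mod_cast hkl
  · have hl : (l : ℝ) < n := by exact_mod_cast l.2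
    rw [div_sub_div_same, div_lt_iff₀ hn]
    nlinarith [pi_pos, (k : ℕ).cast_nonneg (α := ℝ)]

noncomputable def std (n : ℕ) : CircleConfig n := ofAngles (stdAngles n) stdAngles_mem

lemma permAct_finRotate_std [NeZero n] :
    permAct (finRotate n) (std n) =
      ofAngles _ (add_const_mem_increasingAngles stdAngles_mem (2 * π / n)) := by
  have hn : (n : ℂ) ≠ 0 := Nat.cast_ne_zero.2 (NeZero.ne n)
  set ζ := Complex.exp (2 * π / n * I)
  have hζ : ζ ^ n = 1 := by
    rw [← Complex.exp_nat_mul]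
    convert Complex.exp_two_pi_mul_I using 2
    field_simp
  have hpow : ∀ m : ℕ, Complex.exp ((2 * π * m / n : ℝ) * I) = ζ ^ m := fun m => by
    rw [← Complex.exp_nat_mul]
    push_cast
    ring_nf
  ext k : 2
  show Complex.exp (stdAngles n (finRotate n k) * I) =
    Complex.exp ((stdAngles n k + 2 * π / n : ℝ) * I)
  have hk : stdAngles n k + 2 * π / n = 2 * π * ((k + 1 : ℕ) : ℝ) / n := by
    unfold stdAngles; push_cast; ring
  rw [stdAngles, hk, hpow, hpow, pow_eq_pow_mod (k + 1) hζ, finRotate_apply, Fin.val_add,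
    Fin.val_one', Nat.add_mod_mod]

lemma finRotate_mem_componentStabilizer_std [NeZero n] :
    finRotate n ∈ componentStabilizer (std n) := by
  rw [mem_componentStabilizer, permAct_finRotate_std]
  exact connectedComponent_ofAngles_eq _ _

lemma signedArea_std_pos_iff [NeZero n] {j k : Fin n} (hj : 0 < j) (hk : 0 < k) :
    0 < signedArea 0 j k (std n) ↔ j < k := by
  refine ⟨fun hpos => ?_, signedArea_ofAngles_pos stdAngles_mem hj⟩
  rcases lt_trichotomy j k with hjk | rfl | hkj
  · exact hjk
  · linarith [signedArea_swap 0 j j (std n)]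
  · have hkj' : 0 < signedArea 0 k j (std n) := signedArea_ofAngles_pos stdAngles_mem hk hkj
    linarith [signedArea_swap 0 k j (std n)]

/-- `ρ` keeps every triangle `0, k, l` counterclockwise, so it is monotone. -/
lemma eq_one_of_mem_componentStabilizer_std [NeZero n] {ρ : Equiv.Perm (Fin n)}
    (hρ : ρ ∈ componentStabilizer (std n)) (h0 : ρ 0 = 0) : ρ = 1 := by
  have hpos : ∀ {k}, 0 < k → 0 < ρ k := fun hk =>
    Fin.pos_iff_ne_zero.2 fun h => hk.ne' (ρ.injective (h.trans h0.symm))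
  have hmono : StrictMono ρ := by
    intro k l hkl
    rcases (Fin.zero_le k).eq_or_lt with rfl | hk
    · rw [h0]
      exact hpos hkl
    have hl := hk.trans hkl
    have hsign := pos_of_mem_connectedComponent (continuous_signedArea 0 k l)
      (fun x => signedArea_ne_zero x hk.ne hl.ne hkl.ne) (connectedComponent_eq_iff_mem.1 hρ)
      ((signedArea_std_pos_iff hk hl).2 hkl)
    rwa [signedArea_permAct, h0, signedArea_std_pos_iff (hpos hk) (hpos hl)] at hsign
  exact Equiv.ext (congrFun ((hmono.range_inj strictMono_id).1 (by simp)))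

lemma componentStabilizer_std [NeZero n] :
    componentStabilizer (std n) = Subgroup.zpowers (finRotate n) := by
  refine le_antisymm (fun σ hσ => ?_)
    (Subgroup.zpowers_le.2 finRotate_mem_componentStabilizer_std)
  set r := finRotate n ^ (σ 0 : ℕ)
  have hr : r 0 = σ 0 := by
    rw [← Equiv.Perm.iterate_eq_pow, ← finCycle_eq_finRotate_iterate]
    simp
  have h1 : r⁻¹ * σ = 1 := by
    refine eq_one_of_mem_componentStabilizer_std ?_ ?_
    · exact mul_mem (inv_mem (pow_mem finRotate_mem_componentStabilizer_std _)) hσ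
    · rw [Equiv.Perm.mul_apply, Equiv.Perm.inv_eq_iff_eq, hr]
  rw [inv_mul_eq_one] at h1
  exact h1 ▸ Subgroup.npow_mem_zpowers _ _

lemma exists_connectedComponent_permAct_eq_std (x : CircleConfig n) :
    ∃ τ : Equiv.Perm (Fin n),
      connectedComponent (permAct τ x) = connectedComponent (std n) := by
  let θ := fun k => arg (x.1 k)
  let τ := Tuple.sort θ
  have hθτ : θ ∘ τ ∈ increasingAngles n := by
    refine ⟨(Tuple.monotone_sort θ).strictMono_of_injective
      ((arg_injective x).comp τ.injective), fun k l => ?_⟩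
    show arg (x.1 (τ l)) - arg (x.1 (τ k)) < 2 * π
    linarith [Complex.arg_le_pi (x.1 (τ l)), Complex.neg_pi_lt_arg (x.1 (τ k)), pi_pos]
  have hx : permAct τ x = ofAngles (θ ∘ τ) hθτ :=
    Subtype.ext (funext fun k => (exp_arg x (τ k)).symm)
  exact ⟨τ, hx ▸ connectedComponent_ofAngles_eq _ _⟩

end CircleConfig

open CircleConfig

theorem stmt7_general (n : ℕ) :
    (∀ x y : CircleConfig n, ∃ σ : Equiv.Perm (Fin n),
      connectedComponent (permAct σ x) = connectedComponent y) ∧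
    (2 ≤ n → ∀ x : CircleConfig n, ∃ c : Equiv.Perm (Fin n),
      c.IsCycle ∧ orderOf c = n ∧ c ≠ 1 ∧
      {σ : Equiv.Perm (Fin n) | connectedComponent (permAct σ x) = connectedComponent x}
        = (Subgroup.zpowers c : Set (Equiv.Perm (Fin n)))) := by
  refine ⟨fun x y => ?_, fun hn x => ?_⟩
  · obtain ⟨τx, hx⟩ := exists_connectedComponent_permAct_eq_std x
    obtain ⟨τy, hy⟩ := exists_connectedComponent_permAct_eq_std y
    refine ⟨τx * τy⁻¹, ?_⟩
    simpa [permAct_permAct] using (connectedComponent_permAct_eq_iff τy⁻¹).2 (hx.trans hy.symm)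
  · have : NeZero n := ⟨by omega⟩
    obtain ⟨τ, hτ⟩ := exists_connectedComponent_permAct_eq_std x
    have hcycle := isCycle_finRotate_of_le hn
    have horder : orderOf (finRotate n) = n := by
      rw [hcycle.orderOf, support_finRotate_of_le hn, Finset.card_univ, Fintype.card_fin]
    refine ⟨MulAut.conj τ (finRotate n), hcycle.conj, (MulEquiv.orderOf_eq _ _).trans horder,
      hcycle.conj.ne_one, ?_⟩
    have h := componentStabilizer_eq_map_permAct τ x
    rw [componentStabilizer_eq_of_connectedComponent_eq hτ, componentStabilizer_std,
      MonoidHom.map_zpowers] at h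
    exact congrArg SetLike.coe h

/-- `S_n` acts transitively on the connected components of `C^n(S¹)`, and for
`n ≥ 2` the stabilizer of each connected component is the nontrivial cyclic
subgroup of order `n` generated by a cyclic permutation (rotation of labels). -/
theorem stmt7 (n : ℕ) (hn : 1 ≤ n) :
    (∀ x y : CircleConfig n, ∃ σ : Equiv.Perm (Fin n),
      connectedComponent (permAct σ x) = connectedComponent y) ∧
    (2 ≤ n → ∀ x : CircleConfig n, ∃ c : Equiv.Perm (Fin n),
      c.IsCycle ∧ orderOf c = n ∧ c ≠ 1 ∧
      {σ : Equiv.Perm (Fin n) | connectedComponent (permAct σ x) = connectedComponent x}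
        = (Subgroup.zpowers c : Set (Equiv.Perm (Fin n)))) :=
  stmt7_general n
end

section
/- For a diagonalizable matrix written as A = S N S^{−1} with S positive semidefinite invertible and N normal, the matrix Φ(A) := S^{−1} N S is well defined (independent of the chosen decomposition): if S₁ N₁ S₁^{−1} = S₂ N₂ S₂^{−1} with S₁, S₂ positive definite and N₁, N₂ normal, then S₁^{−1} N₁ S₁ = S₂^{−1} N₂ S₂. -/
open Matrix
open scoped ComplexOrder

/-! If `N` is normal with finite spectrum, then `Nᴴ = q(N)` for any polynomial `q` interpolating
`z ↦ conj z` on the spectrum. Conjugating by `S` gives `S Nᴴ S⁻¹ = q(S N S⁻¹) = q(A)`, and `q` only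
depends on the spectrum of `A`; so `S Nᴴ S⁻¹` is determined by `A`, and its adjoint is `S⁻¹ N S`
because `S` is hermitian. -/

open Polynomial

lemma Polynomial.aeval_units_conj {R A : Type*} [CommSemiring R] [Semiring A] [Algebra R A]
    (u : Aˣ) (a : A) (q : R[X]) : aeval (↑u * a * ↑u⁻¹) q = ↑u * aeval a q * ↑u⁻¹ := by
  induction q using Polynomial.induction_on' with
  | add p q hp hq => simp only [map_add, hp, hq, mul_add, add_mul]
  | monomial k r =>
    simp only [aeval_monomial, Units.conj_pow, ← mul_assoc, Algebra.commutes r (u : A)]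

lemma Polynomial.exists_eqOn_eval_of_finite {K : Type*} [Field K] {s : Set K} (hs : s.Finite)
    (f : K → K) : ∃ q : K[X], Set.EqOn (q.eval ·) f s := by
  classical
  refine ⟨Lagrange.interpolate hs.toFinset id f, fun z hz => ?_⟩
  simpa using Lagrange.eval_interpolate_at_node f (Set.injOn_id _) (hs.mem_toFinset.mpr hz)

section CStarAlgebra

variable {A : Type*} [CStarAlgebra A]

lemma IsStarNormal.star_eq_aeval {a : A} [IsStarNormal a] {q : ℂ[X]}
    (hq : Set.EqOn (q.eval ·) star (spectrum ℂ a)) : star a = aeval a q := by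
  rw [← cfc_star_id (R := ℂ) a, ← cfc_polynomial q a]
  exact cfc_congr fun z hz => (hq hz).symm

lemma IsStarNormal.units_conj_star_eq_aeval {a : A} [IsStarNormal a] (u : Aˣ) {q : ℂ[X]}
    (hq : Set.EqOn (q.eval ·) star (spectrum ℂ (↑u * a * ↑u⁻¹))) :
    ↑u * star a * ↑u⁻¹ = aeval (↑u * a * ↑u⁻¹) q := by
  rw [spectrum.units_conjugate] at hq
  rw [aeval_units_conj, IsStarNormal.star_eq_aeval hq]

theorem IsStarNormal.units_conj_star_eq_of_units_conj_eq {a b : A} [IsStarNormal a]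
    [IsStarNormal b] {u v : Aˣ} (ha : (spectrum ℂ a).Finite)
    (h : ↑u * a * ↑u⁻¹ = ↑v * b * ↑v⁻¹) :
    ↑u * star a * ↑u⁻¹ = ↑v * star b * ↑v⁻¹ := by
  obtain ⟨q, hq⟩ := exists_eqOn_eval_of_finite
    (spectrum.units_conjugate (R := ℂ) (u := u) ▸ ha) star
  rw [units_conj_star_eq_aeval u hq, units_conj_star_eq_aeval v (h ▸ hq), h]

end CStarAlgebra

namespace Matrix

variable {n : Type*} [Fintype n] [DecidableEq n]

lemma IsHermitian.conjTranspose_mul_conjTranspose_mul_inv {α : Type*} [CommRing α] [StarRing α]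
    {S : Matrix n n α} (hS : S.IsHermitian) (N : Matrix n n α) :
    (S * Nᴴ * S⁻¹)ᴴ = S⁻¹ * N * S := by
  rw [conjTranspose_mul, conjTranspose_mul, conjTranspose_nonsing_inv, hS.eq,
    conjTranspose_conjTranspose, mul_assoc]

open scoped Matrix.Norms.L2Operator in
theorem conj_conjTranspose_eq_of_conj_eq {S₁ S₂ N₁ N₂ : Matrix n n ℂ} (hS₁ : IsUnit S₁)
    (hS₂ : IsUnit S₂) [IsStarNormal N₁] [IsStarNormal N₂]
    (h : S₁ * N₁ * S₁⁻¹ = S₂ * N₂ * S₂⁻¹) : S₁ * N₁ᴴ * S₁⁻¹ = S₂ * N₂ᴴ * S₂⁻¹ := by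
  lift S₁ to (Matrix n n ℂ)ˣ using hS₁
  lift S₂ to (Matrix n n ℂ)ˣ using hS₂
  simp only [← coe_units_inv] at h ⊢
  exact IsStarNormal.units_conj_star_eq_of_units_conj_eq (finite_spectrum _) h

end Matrix

/-- The map `Φ(S N S⁻¹) := S⁻¹ N S` (with `S` positive definite and `N` normal) is
well defined: it does not depend on the chosen decomposition. -/
theorem stmt10 (n : ℕ) (S₁ S₂ N₁ N₂ : Matrix (Fin n) (Fin n) ℂ)
    (hS₁ : S₁.PosDef) (hS₂ : S₂.PosDef)
    (hN₁ : N₁ᴴ * N₁ = N₁ * N₁ᴴ) (hN₂ : N₂ᴴ * N₂ = N₂ * N₂ᴴ)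
    (heq : S₁ * N₁ * S₁⁻¹ = S₂ * N₂ * S₂⁻¹) :
    S₁⁻¹ * N₁ * S₁ = S₂⁻¹ * N₂ * S₂ := by
  have : IsStarNormal N₁ := ⟨hN₁⟩
  have : IsStarNormal N₂ := ⟨hN₂⟩
  have h := conj_conjTranspose_eq_of_conj_eq hS₁.isUnit hS₂.isUnit heq
  simpa only [hS₁.1.conjTranspose_mul_conjTranspose_mul_inv,
    hS₂.1.conjTranspose_mul_conjTranspose_mul_inv] using congrArg conjTranspose h
end

section
/- The map Φ sending A = S N S^{−1} (S positive definite, N normal) to S^{−1} N S preserves spectra and commutativity on diagonalizable matrices: σ(Φ(A)) = σ(A) for every diagonalizable A, and if A, B are diagonalizable with AB = BA then Φ(A)Φ(B) = Φ(B)Φ(A). -/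
open Matrix
open scoped ComplexOrder

variable {n : ℕ}

private lemma herm_inner (A : Matrix (Fin n) (Fin n) ℂ) (v w : Fin n → ℂ) :
    star (A *ᵥ v) ⬝ᵥ w = star v ⬝ᵥ (Aᴴ *ᵥ w) := by
  rw [star_mulVec, dotProduct_mulVec]

/-- For a normal matrix, the kernel of `N` is contained in the kernel of `Nᴴ`. -/
private lemma ker_conjTranspose_of_normal (N : Matrix (Fin n) (Fin n) ℂ)
    (hN : Nᴴ * N = N * Nᴴ) {v : Fin n → ℂ} (h : N *ᵥ v = 0) : Nᴴ *ᵥ v = 0 := by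
  have key : star (Nᴴ *ᵥ v) ⬝ᵥ (Nᴴ *ᵥ v) = 0 := by
    rw [herm_inner, conjTranspose_conjTranspose, mulVec_mulVec, ← hN, ← mulVec_mulVec, h,
      mulVec_zero, dotProduct_zero]
  exact dotProduct_star_self_eq_zero.mp key

private lemma ker_sq_of_normal (N : Matrix (Fin n) (Fin n) ℂ)
    (hN : Nᴴ * N = N * Nᴴ) {v : Fin n → ℂ} (h : N *ᵥ (N *ᵥ v) = 0) : N *ᵥ v = 0 := by
  have h2 : Nᴴ *ᵥ (N *ᵥ v) = 0 := ker_conjTranspose_of_normal N hN h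
  have key : star (N *ᵥ v) ⬝ᵥ (N *ᵥ v) = 0 := by
    rw [herm_inner, h2, dotProduct_zero]
  exact dotProduct_star_self_eq_zero.mp key

private lemma ker_pow_of_normal (N : Matrix (Fin n) (Fin n) ℂ)
    (hN : Nᴴ * N = N * Nᴴ) (k : ℕ) {v : Fin n → ℂ} (h : N ^ k *ᵥ v = 0) :
    k = 0 ∨ N *ᵥ v = 0 := by
  induction k generalizing v with
  | zero => exact Or.inl rfl
  | succ k ih =>
    right
    have h' : N ^ k *ᵥ (N *ᵥ v) = 0 := by
      rw [mulVec_mulVec, ← pow_succ, h]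
    rcases ih h' with h0 | h1
    · subst h0; simpa using h'
    · exact ker_sq_of_normal N hN h1

private lemma sub_smul_normal (N : Matrix (Fin n) (Fin n) ℂ)
    (hN : Nᴴ * N = N * Nᴴ) (μ : ℂ) :
    (N - μ • 1)ᴴ * (N - μ • 1) = (N - μ • 1) * (N - μ • 1)ᴴ := by
  simp only [conjTranspose_sub, conjTranspose_smul, conjTranspose_one, sub_mul, mul_sub,
    Matrix.smul_mul, Matrix.mul_smul, Matrix.one_mul, Matrix.mul_one, hN, smul_smul]
  ring_nf
  abel

/-- Eigenvectors of a normal matrix are eigenvectors of the adjoint with conjugate eigenvalue. -/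
private lemma eigen_adjoint (N : Matrix (Fin n) (Fin n) ℂ)
    (hN : Nᴴ * N = N * Nᴴ) {μ : ℂ} {v : Fin n → ℂ} (h : N *ᵥ v = μ • v) :
    Nᴴ *ᵥ v = (starRingEnd ℂ) μ • v := by
  have h0 : (N - μ • 1) *ᵥ v = 0 := by
    rw [sub_mulVec, smul_mulVec, one_mulVec, h, sub_self]
  have h1 := ker_conjTranspose_of_normal _ (sub_smul_normal N hN μ) h0
  rw [conjTranspose_sub, conjTranspose_smul, conjTranspose_one, sub_mulVec,
    smul_mulVec, one_mulVec, sub_eq_zero] at h1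
  simpa using h1

/-- Fuglede's theorem for complex matrices. -/
private lemma fuglede (N Z : Matrix (Fin n) (Fin n) ℂ)
    (hN : Nᴴ * N = N * Nᴴ) (h : Z * N = N * Z) : Z * Nᴴ = Nᴴ * Z := by
  let f := Matrix.toLinAlgEquiv' N
  have hspan : ⨆ μ, Module.End.maxGenEigenspace f μ = ⊤ :=
    Module.End.iSup_maxGenEigenspace_eq_top f
  have hle : ∀ μ : ℂ, Module.End.maxGenEigenspace f μ ≤
      LinearMap.ker (Matrix.toLinAlgEquiv' (Z * Nᴴ - Nᴴ * Z)) := by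
    intro μ v hv
    rw [Module.End.mem_maxGenEigenspace] at hv
    obtain ⟨k, hk⟩ := hv
    -- translate to matrices
    have hk' : (N - μ • 1) ^ k *ᵥ v = 0 := by
      have hf : f - μ • 1 = Matrix.toLinAlgEquiv' (N - μ • 1) := by
        rw [map_sub, _root_.map_smul, _root_.map_one]
      rw [hf, ← map_pow] at hk
      rwa [Matrix.toLinAlgEquiv'_apply] at hk
    have hEig : N *ᵥ v = μ • v := by
      rcases ker_pow_of_normal _ (sub_smul_normal N hN μ) k hk' with h0 | h1
      · subst h0
        simp only [pow_zero, one_mulVec] at hk'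
        simp [hk']
      · rw [sub_mulVec, smul_mulVec, one_mulVec, sub_eq_zero] at h1
        exact h1
    have hEigZ : N *ᵥ (Z *ᵥ v) = μ • (Z *ᵥ v) := by
      rw [mulVec_mulVec, ← h, ← mulVec_mulVec, hEig, mulVec_smul]
    have e1 : Nᴴ *ᵥ v = (starRingEnd ℂ) μ • v := eigen_adjoint N hN hEig
    have e2 : Nᴴ *ᵥ (Z *ᵥ v) = (starRingEnd ℂ) μ • (Z *ᵥ v) := eigen_adjoint N hN hEigZ
    simp only [LinearMap.mem_ker, Matrix.toLinAlgEquiv'_apply, sub_mulVec,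
      ← mulVec_mulVec, e1, e2, mulVec_smul, sub_self]
  have : LinearMap.ker (Matrix.toLinAlgEquiv' (Z * Nᴴ - Nᴴ * Z)) = ⊤ :=
    top_le_iff.mp (hspan ▸ iSup_le hle)
  have h0 : Matrix.toLinAlgEquiv' (Z * Nᴴ - Nᴴ * Z) = 0 := LinearMap.ker_eq_top.mp this
  have := (map_eq_zero_iff _ (Matrix.toLinAlgEquiv' (R := ℂ) (n := Fin n)).injective).mp h0
  exact sub_eq_zero.mp this
/-- The map `Φ(S N S⁻¹) := S⁻¹ N S` (with `S` positive definite and `N` normal)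
preserves spectra and commutativity on diagonalizable matrices. -/

theorem stmt11 (n : ℕ) (S N T M : Matrix (Fin n) (Fin n) ℂ)
    (hS : S.PosDef) (hT : T.PosDef)
    (hN : Nᴴ * N = N * Nᴴ) (hM : Mᴴ * M = M * Mᴴ) :
    spectrum ℂ (S⁻¹ * N * S) = spectrum ℂ (S * N * S⁻¹) ∧
    ((S * N * S⁻¹) * (T * M * T⁻¹) = (T * M * T⁻¹) * (S * N * S⁻¹) →
      (S⁻¹ * N * S) * (T⁻¹ * M * T) = (T⁻¹ * M * T) * (S⁻¹ * N * S)) := by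
  haveI := hS.isUnit.invertible
  haveI := hT.isUnit.invertible
  constructor
  · have hu : (hS.isUnit.unit : Matrix (Fin n) (Fin n) ℂ) = S := hS.isUnit.unit_spec
    rw [← hu, ← Matrix.coe_units_inv, spectrum.units_conjugate', spectrum.units_conjugate]
  · intro hcomm
    have hS1 : S * S⁻¹ = 1 := Matrix.mul_inv_of_invertible S
    have hS2 : S⁻¹ * S = 1 := Matrix.inv_mul_of_invertible S
    have hT1 : T * T⁻¹ = 1 := Matrix.mul_inv_of_invertible T
    have hT2 : T⁻¹ * T = 1 := Matrix.inv_mul_of_invertible T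
    have kS : ∀ X : Matrix (Fin n) (Fin n) ℂ, S * (S⁻¹ * X) = X := fun X => by
      rw [← mul_assoc, hS1, one_mul]
    have kS' : ∀ X : Matrix (Fin n) (Fin n) ℂ, S⁻¹ * (S * X) = X := fun X => by
      rw [← mul_assoc, hS2, one_mul]
    have kT : ∀ X : Matrix (Fin n) (Fin n) ℂ, T * (T⁻¹ * X) = X := fun X => by
      rw [← mul_assoc, hT1, one_mul]
    have kT' : ∀ X : Matrix (Fin n) (Fin n) ℂ, T⁻¹ * (T * X) = X := fun X => by
      rw [← mul_assoc, hT2, one_mul]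
    -- Step 1
    have hZ1 : (S⁻¹ * T * M * T⁻¹ * S) * N = N * (S⁻¹ * T * M * T⁻¹ * S) := by
      have h0 := congrArg (fun y => S⁻¹ * y * S) hcomm
      simp only [mul_assoc] at h0 ⊢
      simp only [kS, kS', kT, kT', hS1, hS2, hT1, hT2, mul_one, one_mul] at h0 ⊢
      exact h0.symm
    have f1 := fuglede N _ hN hZ1
    -- Step 2: take conjugate transpose
    have hZ2 : (T * S⁻¹ * N * S * T⁻¹) * Mᴴ = Mᴴ * (T * S⁻¹ * N * S * T⁻¹) := by
      have h0 := congrArg (fun X : Matrix (Fin n) (Fin n) ℂ => Xᴴ) f1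
      simp only [conjTranspose_mul, conjTranspose_conjTranspose, hS.1.eq, hT.1.eq,
        hS.1.inv.eq, hT.1.inv.eq] at h0
      -- h0 : N * (S * T⁻¹ * Mᴴ * T * S⁻¹)-ish = ...
      have h1 := congrArg (fun y => T * S⁻¹ * y * S * T⁻¹) h0
      simp only [mul_assoc] at h1 ⊢
      simp only [kS, kS', kT, kT', hS1, hS2, hT1, hT2, mul_one, one_mul] at h1 ⊢
      exact h1
    have hMnormal : (Mᴴ)ᴴ * Mᴴ = Mᴴ * (Mᴴ)ᴴ := by
      rw [conjTranspose_conjTranspose]; exact hM.symm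
    have f2 := fuglede Mᴴ _ hMnormal hZ2
    rw [conjTranspose_conjTranspose] at f2
    -- Step 3: conjugate by T⁻¹ · T
    have h0 := congrArg (fun y => T⁻¹ * y * T) f2
    simp only [mul_assoc] at h0 ⊢
    simp only [kS, kS', kT, kT', hS1, hS2, hT1, hT2, mul_one, one_mul] at h0 ⊢
    exact h0
end

section
/- The map Φ(S N S^{−1}) = S^{−1} N S (S positive definite, N normal) acts on eigenspaces by eversion: if A is diagonalizable with simple spectrum {λ_1,...,λ_n} and eigenlines ℓ_i = ker(λ_i − A), then the eigenline of Φ(A) for λ_i is (⊕_{j≠i} ℓ_j)^⊥. -/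
/-!
Since `S` is Hermitian, `Φ(A)ᴴ = S Nᴴ S⁻¹`, and since `N` is normal,
`ker (N - μ) = ker (Nᴴ - conj μ)`; conjugating by `S` shows that the eigenline of `A` for `μ` is
the eigenline of `Φ(A)ᴴ` for `conj μ`. An eigenvector of an operator for `λ` is orthogonal to every
eigenvector of its adjoint for `conj μ` when `λ ≠ μ`, so the `λ_i`-eigenline of `Φ(A)` is orthogonal
to all `ℓ_j` with `j ≠ i`. These `n - 1` independent lines span a hyperplane, whose orthogonal
complement is a line, and `Φ(A)`, being similar to `A`, does have the eigenvalue `λ_i`.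
-/

open Matrix
open scoped ComplexOrder

open Module End ComplexConjugate

namespace Module.End

theorem eigenspace_mul_mul_eq_comap {R M : Type*} [CommRing R] [AddCommGroup M] [Module R M]
    {s t : End R M} (hst : s * t = 1) (hts : t * s = 1) (f : End R M) (μ : R) :
    eigenspace (s * f * t) μ = (eigenspace f μ).comap t := by
  ext x
  simp only [Submodule.mem_comap, mem_eigenspace_iff, mul_apply]
  constructor
  · intro h
    simpa [← mul_apply, ← mul_assoc, hts] using congrArg t h
  · intro h
    rw [h, map_smul, ← mul_apply, hst, one_apply]

theorem card_le_finrank_iSup_eigenspace {K V ι : Type*} [Field K] [AddCommGroup V] [Module K V]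
    [FiniteDimensional K V] (f : End K V) {lam : ι → K} (hlam : Function.Injective lam)
    (hne : ∀ j, f.eigenspace (lam j) ≠ ⊥) (p : ι → Prop) [Fintype {j // p j}] :
    Fintype.card {j // p j} ≤ finrank K ↥(⨆ j, ⨆ _ : p j, f.eigenspace (lam j)) := by
  choose v hv hv₀ using fun j => Submodule.exists_mem_ne_zero_of_ne_bot (hne j)
  have hmem (j : {j // p j}) : v j ∈ ⨆ j, ⨆ _ : p j, f.eigenspace (lam j) :=
    Submodule.mem_iSup_of_mem j.1 (Submodule.mem_iSup_of_mem j.2 (hv j))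
  have hli : LinearIndependent K fun j : {j // p j} =>
      (⟨v j, hmem j⟩ : ↥(⨆ j, ⨆ _ : p j, f.eigenspace (lam j))) :=
    LinearIndependent.of_comp (Submodule.subtype _) <|
      (f.eigenvectors_linearIndependent' lam hlam v fun j => ⟨hv j, hv₀ j⟩).comp _
        Subtype.val_injective
  exact hli.fintype_card_le_finrank

end Module.End

section InnerProductSpace

variable {𝕜 E : Type*} [RCLike 𝕜] [NormedAddCommGroup E] [InnerProductSpace 𝕜 E]

theorem ContinuousLinearMap.IsStarNormal.eigenspace_adjoint [CompleteSpace E] {T : E →L[𝕜] E}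
    (hT : IsStarNormal T) (μ : 𝕜) :
    eigenspace (ContinuousLinearMap.adjoint T : E →ₗ[𝕜] E) (conj μ) =
      eigenspace (T : E →ₗ[𝕜] E) μ := by
  have hTμ : IsStarNormal (T - μ • 1) := Commute.isStarNormal_sub <| by
    rw [star_smul, star_one]
    exact (Commute.one_right T).smul_right _
  simpa [eigenspace_def, ← ContinuousLinearMap.star_eq_adjoint] using
    ContinuousLinearMap.IsStarNormal.ker_adjoint_eq_ker hTμ

variable [FiniteDimensional 𝕜 E]

theorem LinearMap.eigenspace_isOrtho_eigenspace_adjoint (T : E →ₗ[𝕜] E) {μ ν : 𝕜} (h : μ ≠ ν) :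
    eigenspace T μ ⟂ eigenspace (LinearMap.adjoint T) (conj ν) := by
  rw [Submodule.isOrtho_iff_inner_eq]
  intro x hx y hy
  have hxy : conj μ * inner 𝕜 x y = conj ν * inner 𝕜 x y := by
    rw [← inner_smul_left, ← mem_eigenspace_iff.mp hx, ← LinearMap.adjoint_inner_right,
      mem_eigenspace_iff.mp hy, inner_smul_right]
  by_contra hxy₀
  exact star_injective.ne h (mul_right_cancel₀ hxy₀ hxy)

theorem Module.End.eq_orthogonal_iSup_eigenspace_of_isOrtho {ι : Type*} [Fintype ι]
    [DecidableEq ι] (f : End 𝕜 E) {lam : ι → 𝕜} (hlam : Function.Injective lam)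
    (hdim : finrank 𝕜 E = Fintype.card ι) (hne : ∀ j, f.eigenspace (lam j) ≠ ⊥) {i : ι}
    {U : Submodule 𝕜 E} (hU : U ≠ ⊥) (hUorth : ∀ j ≠ i, U ⟂ f.eigenspace (lam j)) :
    U = (⨆ j, ⨆ _ : j ≠ i, f.eigenspace (lam j))ᗮ := by
  set W := ⨆ j, ⨆ _ : j ≠ i, f.eigenspace (lam j)
  have hW : Fintype.card ι - 1 ≤ finrank 𝕜 W := by
    simpa [Fintype.card_subtype_compl] using f.card_le_finrank_iSup_eigenspace hlam hne (· ≠ i)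
  have hU₁ : 1 ≤ finrank 𝕜 U := Submodule.one_le_finrank_iff.mpr hU
  refine Submodule.eq_of_le_of_finrank_le ?_ ?_
  · exact Submodule.isOrtho_iff_le.mp <| Submodule.isOrtho_iSup_right.mpr fun j =>
      Submodule.isOrtho_iSup_right.mpr (hUorth j)
  · have := W.finrank_add_finrank_orthogonal
    omega

end InnerProductSpace

namespace Matrix

variable {𝕜 ι : Type*} [RCLike 𝕜] [Fintype ι] [DecidableEq ι]

theorem eigenspace_toEuclideanLin_mul_mul_inv {P : Matrix ι ι 𝕜} (hP : IsUnit P)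
    (M : Matrix ι ι 𝕜) (μ : 𝕜) :
    eigenspace (toEuclideanLin (P * M * P⁻¹)) μ =
      (eigenspace (toEuclideanLin M) μ).comap (toEuclideanLin P⁻¹) := by
  let φ := toLpLinAlgEquiv (R := 𝕜) (n := ι) 2
  have hdet := (isUnit_iff_isUnit_det P).mp hP
  have hst : φ P * φ P⁻¹ = 1 := by rw [← map_mul, mul_nonsing_inv P hdet, map_one]
  have hts : φ P⁻¹ * φ P = 1 := by rw [← map_mul, nonsing_inv_mul P hdet, map_one]
  have h := eigenspace_mul_mul_eq_comap hst hts (φ M) μ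
  rw [← map_mul, ← map_mul] at h
  exact h

theorem eigenspace_toEuclideanLin_conjTranspose {N : Matrix ι ι 𝕜} (hN : IsStarNormal N)
    (μ : 𝕜) : eigenspace (toEuclideanLin Nᴴ) (conj μ) = eigenspace (toEuclideanLin N) μ := by
  have h := ContinuousLinearMap.IsStarNormal.eigenspace_adjoint
    (hN.map (toEuclideanCLM (n := ι) (𝕜 := 𝕜))) μ
  rwa [← ContinuousLinearMap.star_eq_adjoint, ← map_star] at h

theorem eigenspace_toEuclideanLin_ne_bot_iff (M : Matrix ι ι 𝕜) (μ : 𝕜) :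
    eigenspace (toEuclideanLin M) μ ≠ ⊥ ↔ μ ∈ spectrum 𝕜 M := by
  rw [← hasEigenvalue_iff, hasEigenvalue_iff_mem_spectrum, spectrum_toLpLin]

end Matrix

/-- The map `Φ(S N S⁻¹) := S⁻¹ N S` (with `S` positive definite and `N` normal)
acts on the eigenlines of a simple-spectrum diagonalizable matrix `A = S N S⁻¹`
by eversion: the eigenline of `Φ(A)` for `λ_i` is `(⨆_{j ≠ i} ℓ_j)ᗮ`, where
`ℓ_j = ker (λ_j - A)`. -/
theorem stmt12 (n : ℕ) (S N : Matrix (Fin n) (Fin n) ℂ)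
    (hS : S.PosDef) (hN : Nᴴ * N = N * Nᴴ)
    (lam : Fin n → ℂ) (hlam : Function.Injective lam)
    (hne : ∀ i, Module.End.eigenspace (Matrix.toEuclideanLin (S * N * S⁻¹)) (lam i) ≠ ⊥) :
    ∀ i, Module.End.eigenspace (Matrix.toEuclideanLin (S⁻¹ * N * S)) (lam i) =
      (⨆ j, ⨆ _ : j ≠ i,
        Module.End.eigenspace (Matrix.toEuclideanLin (S * N * S⁻¹)) (lam j))ᗮ := by
  intro i
  have hSunit := hS.isUnit
  have hadj : (S⁻¹ * N * S)ᴴ = S * Nᴴ * S⁻¹ := by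
    rw [conjTranspose_mul, conjTranspose_mul, conjTranspose_nonsing_inv, hS.isHermitian.eq,
      mul_assoc]
  have hA (μ : ℂ) : eigenspace (toEuclideanLin (S * N * S⁻¹)) μ =
      eigenspace (LinearMap.adjoint (toEuclideanLin (S⁻¹ * N * S))) (conj μ) := by
    rw [← toEuclideanLin_conjTranspose_eq_adjoint, hadj,
      eigenspace_toEuclideanLin_mul_mul_inv hSunit, eigenspace_toEuclideanLin_mul_mul_inv hSunit,
      eigenspace_toEuclideanLin_conjTranspose ⟨hN⟩]
  have hspec : spectrum ℂ (S⁻¹ * N * S) = spectrum ℂ (S * N * S⁻¹) := by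
    obtain ⟨u, rfl⟩ := hSunit
    rw [← coe_units_inv, spectrum.units_conjugate, spectrum.units_conjugate']
  refine eq_orthogonal_iSup_eigenspace_of_isOrtho (toEuclideanLin (S * N * S⁻¹)) hlam (by simp)
    hne ?_ fun j hj => ?_
  · rw [eigenspace_toEuclideanLin_ne_bot_iff, hspec, ← eigenspace_toEuclideanLin_ne_bot_iff]
    exact hne i
  · rw [hA]
    exact LinearMap.eigenspace_isOrtho_eigenspace_adjoint _ (hlam.ne hj.symm)
end
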